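/- Let k ≥ 1 be an integer and β a real number. If b(2k) < β < b(2k−1), then γ(m, β) ≤ γ(2k−1, β) for every integer m ≥ −1, and γ(m, β) < γ(m+1, β) for every integer m with −1 ≤ m ≤ 2k−2. If instead b(2k+1) < β < b(2k), then γ(m, β) ≤ γ(2k+1, β) for every integer m ≥ −1, γ(m, β) < γ(m+1, β) for every integer m with −1 ≤ m ≤ 2k−2, and γ(2k−2, β) < γ(2k, β) < γ(2k−1, β) < γ(2k+1, β). -/

import Mathlib

/-!
Cassini-type identities for `P` and `H`, all consequences of `H n ^ 2 - 2 * P n ^ 2 = (-1) ^ n`,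
turn each comparison of neighbouring values of `γ` into a linear inequality in `β`:
`γ(2j-1) < γ(2j)` iff `β < b(2j+1)`, `γ(2j-1) < γ(2j+1)` iff `β < b(2j)`, while always
`γ(2j) < γ(2j+1)` and `γ(2j) < γ(2j+2)`. As `b` is strictly decreasing, the odd-indexed
values increase up to the index `2n-1` with `b(2n) < β < b(2n-2)` and decrease afterwards, and
every even-indexed value lies below the next odd-indexed one; so `γ(2n-1)` is the maximum.
The two cases of the theorem are `n = k` and `n = k+1`.
-/

/-- Pell numbers: P 0 = 0, P 1 = 1, P (m+2) = 2·P (m+1) + P m. -/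
def pell : ℕ → ℕ
  | 0 => 0
  | 1 => 1
  | m + 2 => 2 * pell (m + 1) + pell m

/-- Half-companion Pell numbers: H 0 = 1, H 1 = 1, H (m+2) = 2·H (m+1) + H m. -/
def hpell : ℕ → ℕ
  | 0 => 1
  | 1 => 1
  | m + 2 => 2 * hpell (m + 1) + hpell m

/-- For m ≥ -1, γ(m, β): for even m = 2k, γ = H(2k+2)/((β+1)·P(2k+1)); for odd
m = 2k−1, γ = 2·P(2k+1)/((β+1)·H(2k) − (β−1)).  (In particular γ(−1, β) = 1.) -/
noncomputable def gam (m : ℤ) (β : ℝ) : ℝ :=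
  if m % 2 = 0 then
    (hpell (m + 2).toNat : ℝ) / ((β + 1) * (pell (m + 1).toNat : ℝ))
  else
    2 * (pell (m + 2).toNat : ℝ) / ((β + 1) * (hpell (m + 1).toNat : ℝ) - (β - 1))

/-- b(m) = 1 + 2/(P(m+2) − 1) for even m, and 1 + 2/(H(m+1) − 1) for odd m. -/
noncomputable def bb (m : ℕ) : ℝ :=
  if m % 2 = 0 then 1 + 2 / ((pell (m+2) : ℝ) - 1) else 1 + 2 / ((hpell (m+1) : ℝ) - 1)

lemma pell_succ_and_hpell_succ (n : ℕ) :
    pell (n + 1) = pell n + hpell n ∧ hpell (n + 1) = hpell n + 2 * pell n := by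
  induction n with
  | zero => simp [pell, hpell]
  | succ n ih =>
    show 2 * pell (n + 1) + pell n = _ ∧ 2 * hpell (n + 1) + hpell n = _
    omega

lemma pell_succ (n : ℕ) : pell (n + 1) = pell n + hpell n := (pell_succ_and_hpell_succ n).1

lemma hpell_succ (n : ℕ) : hpell (n + 1) = hpell n + 2 * pell n := (pell_succ_and_hpell_succ n).2

lemma one_le_hpell (n : ℕ) : 1 ≤ hpell n := by
  induction n with
  | zero => rfl
  | succ n ih => rw [hpell_succ]; omega

lemma one_le_pell_succ (n : ℕ) : 1 ≤ pell (n + 1) := by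
  rw [pell_succ]; have := one_le_hpell n; omega

lemma hpell_lt_pell_add_two (n : ℕ) : hpell n < pell (n + 2) := by
  have hP : pell (n + 2) = pell (n + 1) + hpell (n + 1) := pell_succ (n + 1)
  have := hpell_succ n
  have := one_le_pell_succ n
  omega

lemma pell_lt_hpell_add_two (n : ℕ) : pell (n + 2) < hpell (n + 2) := by
  have hP : pell (n + 2) = pell (n + 1) + hpell (n + 1) := pell_succ (n + 1)
  have hH : hpell (n + 2) = hpell (n + 1) + 2 * pell (n + 1) := hpell_succ (n + 1)
  have := one_le_pell_succ n
  omega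

lemma one_lt_pell_add_two (n : ℕ) : 1 < pell (n + 2) :=
  (one_le_hpell n).trans_lt (hpell_lt_pell_add_two n)

lemma one_lt_hpell_add_two (n : ℕ) : 1 < hpell (n + 2) :=
  (one_lt_pell_add_two n).trans (pell_lt_hpell_add_two n)

section Cassini

variable {R : Type*} [CommRing R]

lemma hpell_sq_sub_two_mul_pell_sq (n : ℕ) :
    (hpell n : R) ^ 2 - 2 * (pell n : R) ^ 2 = (-1) ^ n := by
  induction n with
  | zero => simp [pell, hpell]
  | succ n ih =>
    push_cast [pell_succ, hpell_succ]
    linear_combination (-1 : R) * ih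

lemma hpell_add_two_mul_hpell (n : ℕ) :
    (hpell (n + 2) : R) * hpell n = 2 * (pell (n + 1) : R) ^ 2 + (-1) ^ n := by
  push_cast [pell_succ, hpell_succ]
  linear_combination hpell_sq_sub_two_mul_pell_sq (R := R) n

lemma two_mul_pell_add_two_mul_pell (n : ℕ) :
    2 * (pell (n + 2) : R) * pell n = (hpell (n + 1) : R) ^ 2 - (-1) ^ n := by
  push_cast [pell_succ, hpell_succ]
  linear_combination (-1 : R) * hpell_sq_sub_two_mul_pell_sq (R := R) n

lemma pell_add_three_mul_hpell (n : ℕ) :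
    (pell (n + 3) : R) * hpell n = pell (n + 1) * hpell (n + 2) + 2 * (-1) ^ n := by
  push_cast [pell_succ, hpell_succ]
  linear_combination 2 * hpell_sq_sub_two_mul_pell_sq (R := R) n

lemma hpell_add_three_mul_pell (n : ℕ) :
    (hpell (n + 3) : R) * pell n = hpell (n + 1) * pell (n + 2) - 2 * (-1) ^ n := by
  push_cast [pell_succ, hpell_succ]
  linear_combination (-2 : R) * hpell_sq_sub_two_mul_pell_sq (R := R) n

end Cassini

lemma lt_one_add_two_div_iff {N β : ℝ} (hN : 1 < N) :
    β < 1 + 2 / (N - 1) ↔ (β - 1) * N < β + 1 := by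
  rw [← sub_lt_iff_lt_add', lt_div_iff₀ (sub_pos.2 hN)]
  constructor <;> intro h <;> linarith

lemma one_add_two_div_lt_iff {N β : ℝ} (hN : 1 < N) :
    1 + 2 / (N - 1) < β ↔ β + 1 < (β - 1) * N := by
  rw [← lt_sub_iff_add_lt', div_lt_iff₀ (sub_pos.2 hN)]
  constructor <;> intro h <;> linarith

lemma bb_two_mul (j : ℕ) : bb (2 * j) = 1 + 2 / ((pell (2 * j + 2) : ℝ) - 1) := by
  rw [bb, if_pos (by omega)]

lemma bb_two_mul_add_one (j : ℕ) : bb (2 * j + 1) = 1 + 2 / ((hpell (2 * j + 2) : ℝ) - 1) := by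
  rw [bb, if_neg (by omega)]

lemma one_lt_bb (m : ℕ) : 1 < bb m := by
  obtain ⟨j, rfl | rfl⟩ := Nat.even_or_odd' m
  · rw [bb_two_mul, lt_add_iff_pos_right]
    have : (1 : ℝ) < pell (2 * j + 2) := by exact_mod_cast one_lt_pell_add_two (2 * j)
    exact div_pos two_pos (sub_pos.2 this)
  · rw [bb_two_mul_add_one, lt_add_iff_pos_right]
    have : (1 : ℝ) < hpell (2 * j + 2) := by exact_mod_cast one_lt_hpell_add_two (2 * j)
    exact div_pos two_pos (sub_pos.2 this)

lemma bb_strictAnti : StrictAnti bb := by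
  refine strictAnti_nat_of_succ_lt fun m => ?_
  obtain ⟨j, rfl | rfl⟩ := Nat.even_or_odd' m
  · rw [bb_two_mul_add_one, bb_two_mul]
    have h1 : (1 : ℝ) < pell (2 * j + 2) := by exact_mod_cast one_lt_pell_add_two (2 * j)
    have h2 : (pell (2 * j + 2) : ℝ) < hpell (2 * j + 2) := by
      exact_mod_cast pell_lt_hpell_add_two (2 * j)
    gcongr
  · rw [show 2 * j + 1 + 1 = 2 * (j + 1) by ring, bb_two_mul, bb_two_mul_add_one]
    have h1 : (1 : ℝ) < hpell (2 * j + 2) := by exact_mod_cast one_lt_hpell_add_two (2 * j)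
    have h2 : (hpell (2 * j + 2) : ℝ) < pell (2 * (j + 1) + 2) := by
      exact_mod_cast hpell_lt_pell_add_two (2 * j + 2)
    gcongr

lemma le_of_forall_le_succ_of_forall_succ_le {α : Type*} [Preorder α] {u : ℕ → α} {n : ℕ}
    (hinc : ∀ i < n, u i ≤ u (i + 1)) (hdec : ∀ i ≥ n, u (i + 1) ≤ u i) (j : ℕ) :
    u j ≤ u n := by
  rcases le_total j n with h | h
  · refine monotoneOn_of_le_succ Set.ordConnected_Iic (fun a _ _ ha => ?_) h le_rfl h
    simpa using hinc a (Order.succ_le_iff.1 ha)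
  · exact antitoneOn_nat_Ici_of_succ_le hdec (le_refl n) h h

lemma exists_nat_eq_two_mul_or_two_mul_sub_one {m : ℤ} (hm : -1 ≤ m) :
    ∃ j : ℕ, m = 2 * j ∨ m = 2 * j - 1 := by
  obtain ⟨t, ht | ht⟩ := Int.even_or_odd' m
  · exact ⟨t.toNat, .inl (by omega)⟩
  · exact ⟨(t + 1).toNat, .inr (by omega)⟩

lemma gam_two_mul (β : ℝ) (j : ℕ) :
    gam (2 * j) β = hpell (2 * j + 2) / ((β + 1) * pell (2 * j + 1)) := by
  rw [gam, if_pos (by omega), show (2 * (j : ℤ) + 2).toNat = 2 * j + 2 by omega,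
    show (2 * (j : ℤ) + 1).toNat = 2 * j + 1 by omega]

lemma gam_two_mul_add_two (β : ℝ) (j : ℕ) :
    gam (2 * j + 2) β = hpell (2 * j + 4) / ((β + 1) * pell (2 * j + 3)) := by
  rw [gam, if_pos (by omega), show (2 * (j : ℤ) + 2 + 2).toNat = 2 * j + 4 by omega,
    show (2 * (j : ℤ) + 2 + 1).toNat = 2 * j + 3 by omega]

lemma gam_two_mul_sub_one (β : ℝ) (j : ℕ) :
    gam (2 * j - 1) β = 2 * pell (2 * j + 1) / ((β + 1) * hpell (2 * j) - (β - 1)) := by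
  rw [gam, if_neg (by omega), show (2 * (j : ℤ) - 1 + 2).toNat = 2 * j + 1 by omega,
    show (2 * (j : ℤ) - 1 + 1).toNat = 2 * j by omega]

lemma gam_two_mul_add_one (β : ℝ) (j : ℕ) :
    gam (2 * j + 1) β = 2 * pell (2 * j + 3) / ((β + 1) * hpell (2 * j + 2) - (β - 1)) := by
  rw [gam, if_neg (by omega), show (2 * (j : ℤ) + 1 + 2).toNat = 2 * j + 3 by omega,
    show (2 * (j : ℤ) + 1 + 1).toNat = 2 * j + 2 by omega]

section Comparisons

variable {β : ℝ}

lemma add_one_mul_pell_pos (hβ : -1 < β) (n : ℕ) : 0 < (β + 1) * pell (n + 1) := by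
  have : (1 : ℝ) ≤ pell (n + 1) := by exact_mod_cast one_le_pell_succ n
  nlinarith

lemma add_one_mul_hpell_sub_pos (hβ : -1 < β) (n : ℕ) : 0 < (β + 1) * hpell n - (β - 1) := by
  have : (1 : ℝ) ≤ hpell n := by exact_mod_cast one_le_hpell n
  nlinarith

lemma gam_two_mul_sub_gam_two_mul_sub_one (hβ : -1 < β) (j : ℕ) :
    gam (2 * j) β - gam (2 * j - 1) β = ((β + 1) - (β - 1) * hpell (2 * j + 2)) /
      ((β + 1) * pell (2 * j + 1) * ((β + 1) * hpell (2 * j) - (β - 1))) := by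
  have hA : (hpell (2 * j + 2) : ℝ) * hpell (2 * j) = 2 * (pell (2 * j + 1) : ℝ) ^ 2 + 1 := by
    simpa [Even.neg_one_pow ⟨j, two_mul j⟩] using hpell_add_two_mul_hpell (R := ℝ) (2 * j)
  rw [gam_two_mul, gam_two_mul_sub_one, div_sub_div _ _ (add_one_mul_pell_pos hβ _).ne'
    (add_one_mul_hpell_sub_pos hβ _).ne']
  congr 1
  linear_combination (β + 1) * hA

lemma gam_two_mul_add_one_sub_gam_two_mul_sub_one (hβ : -1 < β) (j : ℕ) :
    gam (2 * j + 1) β - gam (2 * j - 1) β = 4 * ((β + 1) - (β - 1) * pell (2 * j + 2)) /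
      (((β + 1) * hpell (2 * j + 2) - (β - 1)) * ((β + 1) * hpell (2 * j) - (β - 1))) := by
  have hC :
      (pell (2 * j + 3) : ℝ) * hpell (2 * j) = pell (2 * j + 1) * hpell (2 * j + 2) + 2 := by
    simpa [Even.neg_one_pow ⟨j, two_mul j⟩] using pell_add_three_mul_hpell (R := ℝ) (2 * j)
  have hP : (pell (2 * j + 3) : ℝ) = 2 * pell (2 * j + 2) + pell (2 * j + 1) := by
    exact_mod_cast (rfl : pell (2 * j + 3) = 2 * pell (2 * j + 2) + pell (2 * j + 1))
  rw [gam_two_mul_add_one, gam_two_mul_sub_one, div_sub_div _ _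
    (add_one_mul_hpell_sub_pos hβ _).ne' (add_one_mul_hpell_sub_pos hβ _).ne']
  congr 1
  linear_combination 2 * (β + 1) * hC - 2 * (β - 1) * hP

lemma gam_two_mul_sub_one_lt_gam_two_mul_iff (hβ : -1 < β) (j : ℕ) :
    gam (2 * j - 1) β < gam (2 * j) β ↔ β < bb (2 * j + 1) := by
  have hH : (1 : ℝ) < hpell (2 * j + 2) := by exact_mod_cast one_lt_hpell_add_two (2 * j)
  rw [← sub_pos, gam_two_mul_sub_gam_two_mul_sub_one hβ, div_pos_iff_of_pos_right
    (mul_pos (add_one_mul_pell_pos hβ _) (add_one_mul_hpell_sub_pos hβ _)), sub_pos,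
    bb_two_mul_add_one, lt_one_add_two_div_iff hH]

lemma gam_two_mul_lt_gam_two_mul_sub_one_iff (hβ : -1 < β) (j : ℕ) :
    gam (2 * j) β < gam (2 * j - 1) β ↔ bb (2 * j + 1) < β := by
  have hH : (1 : ℝ) < hpell (2 * j + 2) := by exact_mod_cast one_lt_hpell_add_two (2 * j)
  rw [← sub_neg, gam_two_mul_sub_gam_two_mul_sub_one hβ, div_lt_iff₀
    (mul_pos (add_one_mul_pell_pos hβ _) (add_one_mul_hpell_sub_pos hβ _)), zero_mul, sub_neg,
    bb_two_mul_add_one, one_add_two_div_lt_iff hH]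

lemma gam_two_mul_sub_one_lt_gam_two_mul_add_one_iff (hβ : -1 < β) (j : ℕ) :
    gam (2 * j - 1) β < gam (2 * j + 1) β ↔ β < bb (2 * j) := by
  have hP : (1 : ℝ) < pell (2 * j + 2) := by exact_mod_cast one_lt_pell_add_two (2 * j)
  rw [← sub_pos, gam_two_mul_add_one_sub_gam_two_mul_sub_one hβ, div_pos_iff_of_pos_right
    (mul_pos (add_one_mul_hpell_sub_pos hβ _) (add_one_mul_hpell_sub_pos hβ _)),
    bb_two_mul, lt_one_add_two_div_iff hP]
  constructor <;> intro h <;> linarith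

lemma gam_two_mul_add_one_lt_gam_two_mul_sub_one_iff (hβ : -1 < β) (j : ℕ) :
    gam (2 * j + 1) β < gam (2 * j - 1) β ↔ bb (2 * j) < β := by
  have hP : (1 : ℝ) < pell (2 * j + 2) := by exact_mod_cast one_lt_pell_add_two (2 * j)
  rw [← sub_neg, gam_two_mul_add_one_sub_gam_two_mul_sub_one hβ, div_lt_iff₀
    (mul_pos (add_one_mul_hpell_sub_pos hβ _) (add_one_mul_hpell_sub_pos hβ _)), zero_mul,
    bb_two_mul, one_add_two_div_lt_iff hP]
  constructor <;> intro h <;> linarith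

lemma gam_two_mul_lt_gam_two_mul_add_one (hβ : 1 ≤ β) (j : ℕ) :
    gam (2 * j) β < gam (2 * j + 1) β := by
  have hB : 2 * (pell (2 * j + 3) : ℝ) * pell (2 * j + 1) = hpell (2 * j + 2) ^ 2 + 1 := by
    simpa [Odd.neg_one_pow ⟨j, rfl⟩] using two_mul_pell_add_two_mul_pell (R := ℝ) (2 * j + 1)
  have hH : 0 ≤ (β - 1) * hpell (2 * j + 2) := mul_nonneg (sub_nonneg.2 hβ) (Nat.cast_nonneg _)
  rw [gam_two_mul, gam_two_mul_add_one, div_lt_div_iff₀ (add_one_mul_pell_pos (by linarith) _)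
    (add_one_mul_hpell_sub_pos (by linarith) _)]
  linear_combination -(β + 1) * hB + hH + hβ

lemma gam_two_mul_lt_gam_two_mul_add_two (hβ : -1 < β) (j : ℕ) :
    gam (2 * j) β < gam (2 * j + 2) β := by
  have hD :
      (hpell (2 * j + 4) : ℝ) * pell (2 * j + 1) = hpell (2 * j + 2) * pell (2 * j + 3) + 2 := by
    simpa [Odd.neg_one_pow ⟨j, rfl⟩] using hpell_add_three_mul_pell (R := ℝ) (2 * j + 1)
  -- stated apart so that `rw` below writes the index as `2 * j + 3`, not `2 * j + 2 + 1`
  have hE : 0 < (β + 1) * pell (2 * j + 3) := add_one_mul_pell_pos hβ (2 * j + 2)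
  rw [gam_two_mul, gam_two_mul_add_two, div_lt_div_iff₀ (add_one_mul_pell_pos hβ _) hE]
  linear_combination -(β + 1) * hD + 2 * hβ

lemma gam_lt_gam_add_one (hβ : 1 ≤ β) {k : ℕ} (hβk : β < bb (2 * k - 1)) {m : ℤ}
    (hm : -1 ≤ m) (hmk : m ≤ 2 * k - 2) : gam m β < gam (m + 1) β := by
  obtain ⟨j, rfl | rfl⟩ := exists_nat_eq_two_mul_or_two_mul_sub_one hm
  · exact gam_two_mul_lt_gam_two_mul_add_one hβ j
  · rw [sub_add_cancel]
    exact (gam_two_mul_sub_one_lt_gam_two_mul_iff (by linarith) j).2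
      (hβk.trans_le (bb_strictAnti.antitone (by omega)))

lemma gam_le_gam_two_mul_sub_one {n : ℕ} (hlo : bb (2 * n) < β)
    (hhi : ∀ i < n, β < bb (2 * i)) {m : ℤ} (hm : -1 ≤ m) :
    gam m β ≤ gam (2 * n - 1) β := by
  have hβ : 1 < β := (one_lt_bb _).trans hlo
  have hsucc (i : ℕ) : 2 * ((i + 1 : ℕ) : ℤ) - 1 = 2 * i + 1 := by push_cast; ring
  have hodd (j : ℕ) : gam (2 * j - 1) β ≤ gam (2 * n - 1) β := by
    refine le_of_forall_le_succ_of_forall_succ_le (u := fun i : ℕ => gam (2 * i - 1) β)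
      (fun i hi => ?_) (fun i hi => ?_) j
    · simpa only [hsucc] using
        ((gam_two_mul_sub_one_lt_gam_two_mul_add_one_iff (by linarith) i).2 (hhi i hi)).le
    · simpa only [hsucc] using ((gam_two_mul_add_one_lt_gam_two_mul_sub_one_iff (by linarith) i).2
        ((bb_strictAnti.antitone (by omega)).trans_lt hlo)).le
  obtain ⟨j, rfl | rfl⟩ := exists_nat_eq_two_mul_or_two_mul_sub_one hm
  · have := hodd (j + 1)
    rw [hsucc] at this
    exact (gam_two_mul_lt_gam_two_mul_add_one hβ.le j).le.trans this
  · exact hodd j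

end Comparisons

theorem stmt_4 (k : ℕ) (hk : 1 ≤ k) (β : ℝ) :
    (bb (2*k) < β → β < bb (2*k-1) →
      (∀ m : ℤ, -1 ≤ m → gam m β ≤ gam (2*(k:ℤ)-1) β) ∧
      (∀ m : ℤ, -1 ≤ m → m ≤ 2*(k:ℤ)-2 → gam m β < gam (m+1) β)) ∧
    (bb (2*k+1) < β → β < bb (2*k) →
      (∀ m : ℤ, -1 ≤ m → gam m β ≤ gam (2*(k:ℤ)+1) β) ∧
      (∀ m : ℤ, -1 ≤ m → m ≤ 2*(k:ℤ)-2 → gam m β < gam (m+1) β) ∧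
      gam (2*(k:ℤ)-2) β < gam (2*(k:ℤ)) β ∧
      gam (2*(k:ℤ)) β < gam (2*(k:ℤ)-1) β ∧
      gam (2*(k:ℤ)-1) β < gam (2*(k:ℤ)+1) β) := by
  refine ⟨fun hlo hhi => ⟨fun m hm => ?_, fun m hm hmk => ?_⟩, fun hlo hhi => ?_⟩
  · exact gam_le_gam_two_mul_sub_one hlo
      (fun i hi => hhi.trans_le (bb_strictAnti.antitone (by omega))) hm
  · exact gam_lt_gam_add_one ((one_lt_bb _).trans hlo).le hhi hm hmk
  have hβ : 1 < β := (one_lt_bb _).trans hlo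
  refine ⟨fun m hm => ?_, fun m hm hmk => gam_lt_gam_add_one hβ.le
      (hhi.trans (bb_strictAnti (by omega))) hm hmk, ?_,
    (gam_two_mul_lt_gam_two_mul_sub_one_iff (by linarith) k).2 hlo,
    (gam_two_mul_sub_one_lt_gam_two_mul_add_one_iff (by linarith) k).2 hhi⟩
  · convert gam_le_gam_two_mul_sub_one (n := k + 1) ((bb_strictAnti (by omega)).trans hlo)
      (fun i hi => hhi.trans_le (bb_strictAnti.antitone (by omega))) hm using 2
    push_cast; ring
  · convert gam_two_mul_lt_gam_two_mul_add_two (by linarith : -1 < β) (k - 1) using 2 <;>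
      push_cast [Nat.cast_sub hk] <;> ring
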